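/- Let v : ℝ × ℝ → ℝ be a smooth function which solves the fifth order modified Korteweg–de Vries equation v_t = v_5 − 10 v_3 v² − 40 v_2 v_1 v − 10 v_1³ + 30 v_1 v⁴. Then the Miura transform u = v_1 − v² solves the fifth order Korteweg–de Vries equation u_t = u_5 + 10 u_3 u + 20 u_2 u_1 + 30 u_1 u². This is the bosonic component of the paper's claim that the supersymmetric fifth order modified KdV equation is related to the supersymmetric fifth order KdV equation by the Miura transformation Φ ↦ Φ_1 − Φ(DΦ). -/

import Mathlib

/-- Partial derivative with respect to the space variable (first argument). -/
noncomputable def dx (f : ℝ × ℝ → ℝ) : ℝ × ℝ → ℝ :=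
  fun p => deriv (fun y => f (y, p.2)) p.1

/-- Partial derivative with respect to the time variable (second argument). -/
noncomputable def dt (f : ℝ × ℝ → ℝ) : ℝ × ℝ → ℝ :=
  fun p => deriv (fun s => f (p.1, s)) p.2

lemma slice_x_hasDerivAt {f : ℝ × ℝ → ℝ} (hf : ContDiff ℝ (⊤ : ℕ∞) f) (t y : ℝ) :
    HasDerivAt (fun y' => f (y', t)) (dx f (y, t)) y := by
  have hd : DifferentiableAt ℝ (fun y' => f (y', t)) y :=
    (hf.differentiable (by simp) (y, t)).comp y (differentiableAt_id.prodMk (differentiableAt_const t))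
  exact hd.hasDerivAt

lemma slice_t_hasDerivAt {f : ℝ × ℝ → ℝ} (hf : ContDiff ℝ (⊤ : ℕ∞) f) (x s : ℝ) :
    HasDerivAt (fun s' => f (x, s')) (dt f (x, s)) s := by
  have hd : DifferentiableAt ℝ (fun s' => f (x, s')) s :=
    (hf.differentiable (by simp) (x, s)).comp s ((differentiableAt_const x).prodMk differentiableAt_id)
  exact hd.hasDerivAt

lemma dx_eq_fderiv {f : ℝ × ℝ → ℝ} (hf : ContDiff ℝ (⊤ : ℕ∞) f) :
    dx f = fun p => fderiv ℝ f p (1, 0) := by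
  funext p
  have h1 : HasDerivAt (fun y : ℝ => (y, p.2)) ((1:ℝ), (0:ℝ)) p.1 :=
    HasDerivAt.prodMk (hasDerivAt_id p.1) (hasDerivAt_const p.1 p.2)
  have h2 : HasFDerivAt f (fderiv ℝ f p) p := (hf.differentiable (by simp) p).hasFDerivAt
  exact (h2.comp_hasDerivAt p.1 h1).deriv

lemma dt_eq_fderiv {f : ℝ × ℝ → ℝ} (hf : ContDiff ℝ (⊤ : ℕ∞) f) :
    dt f = fun p => fderiv ℝ f p (0, 1) := by
  funext p
  have h1 : HasDerivAt (fun s : ℝ => (p.1, s)) ((0:ℝ), (1:ℝ)) p.2 :=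
    HasDerivAt.prodMk (hasDerivAt_const p.2 p.1) (hasDerivAt_id p.2)
  have h2 : HasFDerivAt f (fderiv ℝ f p) p := (hf.differentiable (by simp) p).hasFDerivAt
  exact (h2.comp_hasDerivAt p.2 h1).deriv

lemma contDiff_dx {f : ℝ × ℝ → ℝ} (hf : ContDiff ℝ (⊤ : ℕ∞) f) : ContDiff ℝ (⊤ : ℕ∞) (dx f) := by
  rw [dx_eq_fderiv hf]
  exact (hf.fderiv_right (by simp)).clm_apply contDiff_const

lemma fderiv_apply_const {f : ℝ × ℝ → ℝ} (hf : ContDiff ℝ (⊤ : ℕ∞) f) (p w u : ℝ × ℝ) :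
    fderiv ℝ (fun q => fderiv ℝ f q u) p w = fderiv ℝ (fderiv ℝ f) p w u := by
  have hd : DifferentiableAt ℝ (fderiv ℝ f) p :=
    ((hf.fderiv_right (m := (⊤ : ℕ∞)) (by simp)).differentiable (by simp)) p
  rw [fderiv_clm_apply hd (differentiableAt_const _)]
  simp

lemma dt_dx_comm {f : ℝ × ℝ → ℝ} (hf : ContDiff ℝ (⊤ : ℕ∞) f) : dt (dx f) = dx (dt f) := by
  have h1 : ContDiff ℝ (⊤ : ℕ∞) (fun q => fderiv ℝ f q (1, 0)) :=
    (hf.fderiv_right (by simp)).clm_apply contDiff_const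
  have h2 : ContDiff ℝ (⊤ : ℕ∞) (fun q => fderiv ℝ f q (0, 1)) :=
    (hf.fderiv_right (by simp)).clm_apply contDiff_const
  rw [dx_eq_fderiv hf, dt_eq_fderiv hf, dt_eq_fderiv h1, dx_eq_fderiv h2]
  funext p
  rw [fderiv_apply_const hf, fderiv_apply_const hf]
  exact (hf.contDiffAt.isSymmSndFDerivAt (by rw [minSmoothness_of_isRCLikeNormedField]; exact WithTop.coe_le_coe.mpr le_top)).eq _ _

lemma miura_e1 (v : ℝ × ℝ → ℝ) (hv : ContDiff ℝ (⊤ : ℕ∞) v) :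
    dx (fun q => dx v q - v q ^ 2) = fun q => dx (dx v) q - 2 * v q * dx v q := by
  funext q
  have h : HasDerivAt (fun y => dx v (y, q.2) - v (y, q.2) ^ 2)
      (dx (dx v) q - 2 * v q * dx v q) q.1 := by
    have h0 := (slice_x_hasDerivAt (contDiff_dx hv) q.2 q.1).sub
      ((slice_x_hasDerivAt hv q.2 q.1).pow 2)
    convert h0 using 1
    all_goals (try with_reducible_and_instances rfl)
    all_goals (try funext y)
    all_goals (try push_cast)
    all_goals (try simp only [Pi.sub_apply, Pi.add_apply, Pi.mul_apply, Pi.pow_apply])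
    all_goals ring
  exact h.deriv

lemma miura_e2 (v : ℝ × ℝ → ℝ) (hv : ContDiff ℝ (⊤ : ℕ∞) v) :
    dx (fun q => dx (dx v) q - 2 * v q * dx v q)
      = fun q => dx (dx (dx v)) q - 2 * (dx v q) ^ 2 - 2 * v q * dx (dx v) q := by
  funext q
  have H0 := slice_x_hasDerivAt hv q.2 q.1
  have H1 := slice_x_hasDerivAt (contDiff_dx hv) q.2 q.1
  have H2 := slice_x_hasDerivAt (contDiff_dx (contDiff_dx hv)) q.2 q.1
  have h : HasDerivAt (fun y => dx (dx v) (y, q.2) - 2 * v (y, q.2) * dx v (y, q.2))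
      (dx (dx (dx v)) q - 2 * (dx v q) ^ 2 - 2 * v q * dx (dx v) q) q.1 := by
    have h0 := H2.sub ((H0.mul H1).const_mul 2)
    convert h0 using 1
    all_goals (try with_reducible_and_instances rfl)
    all_goals (try funext y)
    all_goals (try push_cast)
    all_goals (try simp only [Pi.sub_apply, Pi.add_apply, Pi.mul_apply, Pi.pow_apply])
    all_goals ring
  exact h.deriv

lemma miura_e3 (v : ℝ × ℝ → ℝ) (hv : ContDiff ℝ (⊤ : ℕ∞) v) :
    dx (fun q => dx (dx (dx v)) q - 2 * (dx v q) ^ 2 - 2 * v q * dx (dx v) q)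
      = fun q => dx (dx (dx (dx v))) q - 6 * dx v q * dx (dx v) q
          - 2 * v q * dx (dx (dx v)) q := by
  funext q
  have H0 := slice_x_hasDerivAt hv q.2 q.1
  have H1 := slice_x_hasDerivAt (contDiff_dx hv) q.2 q.1
  have H2 := slice_x_hasDerivAt (contDiff_dx (contDiff_dx hv)) q.2 q.1
  have H3 := slice_x_hasDerivAt (contDiff_dx (contDiff_dx (contDiff_dx hv))) q.2 q.1
  have h : HasDerivAt
      (fun y => dx (dx (dx v)) (y, q.2) - 2 * (dx v (y, q.2)) ^ 2
        - 2 * v (y, q.2) * dx (dx v) (y, q.2))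
      (dx (dx (dx (dx v))) q - 6 * dx v q * dx (dx v) q - 2 * v q * dx (dx (dx v)) q) q.1 := by
    have h0 := (H3.sub ((H1.pow 2).const_mul 2)).sub ((H0.mul H2).const_mul 2)
    convert h0 using 1
    all_goals (try with_reducible_and_instances rfl)
    all_goals (try funext y)
    all_goals (try push_cast)
    all_goals (try simp only [Pi.sub_apply, Pi.add_apply, Pi.mul_apply, Pi.pow_apply])
    all_goals ring
  exact h.deriv

lemma miura_e4 (v : ℝ × ℝ → ℝ) (hv : ContDiff ℝ (⊤ : ℕ∞) v) :
    dx (fun q => dx (dx (dx (dx v))) q - 6 * dx v q * dx (dx v) q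
          - 2 * v q * dx (dx (dx v)) q)
      = fun q => dx (dx (dx (dx (dx v)))) q - 6 * (dx (dx v) q) ^ 2
          - 8 * dx v q * dx (dx (dx v)) q - 2 * v q * dx (dx (dx (dx v))) q := by
  funext q
  have H0 := slice_x_hasDerivAt hv q.2 q.1
  have H1 := slice_x_hasDerivAt (contDiff_dx hv) q.2 q.1
  have H2 := slice_x_hasDerivAt (contDiff_dx (contDiff_dx hv)) q.2 q.1
  have H3 := slice_x_hasDerivAt (contDiff_dx (contDiff_dx (contDiff_dx hv))) q.2 q.1
  have H4 := slice_x_hasDerivAt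
    (contDiff_dx (contDiff_dx (contDiff_dx (contDiff_dx hv)))) q.2 q.1
  have h : HasDerivAt
      (fun y => dx (dx (dx (dx v))) (y, q.2) - 6 * dx v (y, q.2) * dx (dx v) (y, q.2)
        - 2 * v (y, q.2) * dx (dx (dx v)) (y, q.2))
      (dx (dx (dx (dx (dx v)))) q - 6 * (dx (dx v) q) ^ 2
        - 8 * dx v q * dx (dx (dx v)) q - 2 * v q * dx (dx (dx (dx v))) q) q.1 := by
    have h0 := (H4.sub ((H1.mul H2).const_mul 6)).sub ((H0.mul H3).const_mul 2)
    convert h0 using 1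
    all_goals (try with_reducible_and_instances rfl)
    all_goals (try funext y)
    all_goals (try push_cast)
    all_goals (try simp only [Pi.sub_apply, Pi.add_apply, Pi.mul_apply, Pi.pow_apply])
    all_goals ring
  exact h.deriv

lemma miura_e5 (v : ℝ × ℝ → ℝ) (hv : ContDiff ℝ (⊤ : ℕ∞) v) :
    dx (fun q => dx (dx (dx (dx (dx v)))) q - 6 * (dx (dx v) q) ^ 2
          - 8 * dx v q * dx (dx (dx v)) q - 2 * v q * dx (dx (dx (dx v))) q)
      = fun q => dx (dx (dx (dx (dx (dx v))))) q - 20 * dx (dx v) q * dx (dx (dx v)) q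
          - 10 * dx v q * dx (dx (dx (dx v))) q - 2 * v q * dx (dx (dx (dx (dx v)))) q := by
  funext q
  have H0 := slice_x_hasDerivAt hv q.2 q.1
  have H1 := slice_x_hasDerivAt (contDiff_dx hv) q.2 q.1
  have H2 := slice_x_hasDerivAt (contDiff_dx (contDiff_dx hv)) q.2 q.1
  have H3 := slice_x_hasDerivAt (contDiff_dx (contDiff_dx (contDiff_dx hv))) q.2 q.1
  have H4 := slice_x_hasDerivAt
    (contDiff_dx (contDiff_dx (contDiff_dx (contDiff_dx hv)))) q.2 q.1
  have H5 := slice_x_hasDerivAt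
    (contDiff_dx (contDiff_dx (contDiff_dx (contDiff_dx (contDiff_dx hv))))) q.2 q.1
  have h : HasDerivAt
      (fun y => dx (dx (dx (dx (dx v)))) (y, q.2) - 6 * (dx (dx v) (y, q.2)) ^ 2
        - 8 * dx v (y, q.2) * dx (dx (dx v)) (y, q.2)
        - 2 * v (y, q.2) * dx (dx (dx (dx v))) (y, q.2))
      (dx (dx (dx (dx (dx (dx v))))) q - 20 * dx (dx v) q * dx (dx (dx v)) q
        - 10 * dx v q * dx (dx (dx (dx v))) q - 2 * v q * dx (dx (dx (dx (dx v)))) q) q.1 := by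
    have h0 := ((H5.sub ((H2.pow 2).const_mul 6)).sub
      ((H1.mul H3).const_mul 8)).sub ((H0.mul H4).const_mul 2)
    convert h0 using 1
    all_goals (try with_reducible_and_instances rfl)
    all_goals (try funext y)
    all_goals (try push_cast)
    all_goals (try simp only [Pi.sub_apply, Pi.add_apply, Pi.mul_apply, Pi.pow_apply])
    all_goals ring
  exact h.deriv

/-- Miura transformation: if $v$ solves the fifth order mKdV equation, then
$u = v_1 - v^2$ solves the fifth order KdV equation. -/
theorem miura_mKdV5_to_KdV5 (v : ℝ × ℝ → ℝ) (hv : ContDiff ℝ (⊤ : ℕ∞) v)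
    (heq : ∀ p, dt v p =
      dx (dx (dx (dx (dx v)))) p - 10 * dx (dx (dx v)) p * (v p) ^ 2
        - 40 * dx (dx v) p * dx v p * v p - 10 * (dx v p) ^ 3
        + 30 * dx v p * (v p) ^ 4) :
    ∀ p, dt (fun q => dx v q - (v q) ^ 2) p =
      dx (dx (dx (dx (dx (fun q => dx v q - (v q) ^ 2))))) p
        + 10 * dx (dx (dx (fun q => dx v q - (v q) ^ 2))) p * (dx v p - (v p) ^ 2)
        + 20 * dx (dx (fun q => dx v q - (v q) ^ 2)) p
            * dx (fun q => dx v q - (v q) ^ 2) p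
        + 30 * dx (fun q => dx v q - (v q) ^ 2) p * (dx v p - (v p) ^ 2) ^ 2 := by
  intro p
  have hE : dt v = fun q =>
      dx (dx (dx (dx (dx v)))) q - 10 * dx (dx (dx v)) q * (v q) ^ 2
        - 40 * dx (dx v) q * dx v q * v q - 10 * (dx v q) ^ 3
        + 30 * dx v q * (v q) ^ 4 := funext heq
  -- time derivative of the Miura transform
  have hLHS : dt (fun q => dx v q - (v q) ^ 2) p = dt (dx v) p - 2 * v p * dt v p := by
    have h : HasDerivAt (fun s => dx v (p.1, s) - v (p.1, s) ^ 2)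
        (dt (dx v) p - 2 * v p * dt v p) p.2 := by
      have h0 := (slice_t_hasDerivAt (contDiff_dx hv) p.1 p.2).sub
        ((slice_t_hasDerivAt hv p.1 p.2).pow 2)
      convert h0 using 1
      all_goals (try with_reducible_and_instances rfl)
      all_goals (try funext y)
      all_goals (try push_cast)
      all_goals (try simp only [Pi.sub_apply, Pi.add_apply, Pi.mul_apply, Pi.pow_apply])
      all_goals ring
    exact h.deriv
  -- space derivative of the mKdV right-hand side
  have hB : dx (fun q =>
      dx (dx (dx (dx (dx v)))) q - 10 * dx (dx (dx v)) q * (v q) ^ 2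
        - 40 * dx (dx v) q * dx v q * v q - 10 * (dx v q) ^ 3
        + 30 * dx v q * (v q) ^ 4) p
      = dx (dx (dx (dx (dx (dx v))))) p
        - 70 * (dx v p) ^ 2 * dx (dx v) p - 40 * v p * (dx (dx v) p) ^ 2
        - 60 * v p * dx v p * dx (dx (dx v)) p - 10 * (v p) ^ 2 * dx (dx (dx (dx v))) p
        + 120 * (v p) ^ 3 * (dx v p) ^ 2 + 30 * (v p) ^ 4 * dx (dx v) p := by
    have H0 := slice_x_hasDerivAt hv p.2 p.1
    have H1 := slice_x_hasDerivAt (contDiff_dx hv) p.2 p.1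
    have H2 := slice_x_hasDerivAt (contDiff_dx (contDiff_dx hv)) p.2 p.1
    have H3 := slice_x_hasDerivAt (contDiff_dx (contDiff_dx (contDiff_dx hv))) p.2 p.1
    have H4 := slice_x_hasDerivAt
      (contDiff_dx (contDiff_dx (contDiff_dx (contDiff_dx hv)))) p.2 p.1
    have H5 := slice_x_hasDerivAt
      (contDiff_dx (contDiff_dx (contDiff_dx (contDiff_dx (contDiff_dx hv))))) p.2 p.1
    have h : HasDerivAt (fun y =>
        dx (dx (dx (dx (dx v)))) (y, p.2) - 10 * dx (dx (dx v)) (y, p.2) * (v (y, p.2)) ^ 2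
          - 40 * dx (dx v) (y, p.2) * dx v (y, p.2) * v (y, p.2) - 10 * (dx v (y, p.2)) ^ 3
          + 30 * dx v (y, p.2) * (v (y, p.2)) ^ 4)
        (dx (dx (dx (dx (dx (dx v))))) p
          - 70 * (dx v p) ^ 2 * dx (dx v) p - 40 * v p * (dx (dx v) p) ^ 2
          - 60 * v p * dx v p * dx (dx (dx v)) p - 10 * (v p) ^ 2 * dx (dx (dx (dx v))) p
          + 120 * (v p) ^ 3 * (dx v p) ^ 2 + 30 * (v p) ^ 4 * dx (dx v) p) p.1 := by
      have h0 := (((H5.sub ((H3.mul (H0.pow 2)).const_mul 10)).sub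
        (((H2.mul H1).mul H0).const_mul 40)).sub
        ((H1.pow 3).const_mul 10)).add ((H1.mul (H0.pow 4)).const_mul 30)
      convert h0 using 1
      all_goals (try with_reducible_and_instances rfl)
      all_goals (try funext y)
      all_goals (try push_cast)
      all_goals (try simp only [Pi.sub_apply, Pi.add_apply, Pi.mul_apply, Pi.pow_apply])
      all_goals ring
    exact h.deriv
  rw [miura_e1 v hv, miura_e2 v hv, miura_e3 v hv, miura_e4 v hv, miura_e5 v hv,
    hLHS, dt_dx_comm hv, hE, hB]
  simp only
  ring
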